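/- arXiv:1402.5884 — 3 statements merged into one kernel-verified Lean document; each statement's English description precedes it below -/
import Mathlib

section
/- Assume S_* ≠ ∅. Then along Algorithm A1 one has lim_{k→∞} α_k ‖x^k − P_C(z^k)‖² = 0. -/
/-!
At `x k ∈ C` the projection inequality gives
`‖x k - P_C(z k)‖² ≤ β_k ⟪∇f(x k), x k - P_C(z k)⟫`, so the Armijo condition forces
`f(x (k+1)) + (δ / β̂) α_k ‖x k - P_C(z k)‖² ≤ f(x k)`. The values `f(x k)` therefore decrease
and are bounded below by the optimal value, hence converge, and the decrease per step tends
to zero.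
-/

open Filter Topology
open scoped RealInnerProductSpace

lemma norm_sub_sq_le_mul_inner_of_inner_sub_smul_le_zero {H : Type*} [NormedAddCommGroup H]
    [InnerProductSpace ℝ H] {x g p : H} {β : ℝ} (h : ⟪x - β • g - p, x - p⟫ ≤ 0) :
    ‖x - p‖ ^ 2 ≤ β * ⟪g, x - p⟫ := by
  rw [show x - β • g - p = (x - p) - β • g by abel, inner_sub_left, real_inner_smul_left,
    real_inner_self_eq_norm_sq] at h
  linarith

lemma add_div_mul_le_of_armijo {f₀ f₁ α β β' δ n g : ℝ} (hδ : 0 ≤ δ) (hα : 0 ≤ α)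
    (hβ : 0 < β) (hββ' : β ≤ β') (hn : 0 ≤ n) (hng : n ≤ β * g)
    (harmijo : f₁ ≤ f₀ - δ * α * g) :
    f₁ + δ / β' * (α * n) ≤ f₀ := by
  have hn_div : n / β' ≤ g :=
    calc n / β' ≤ n / β := div_le_div_of_nonneg_left hn hβ hββ'
      _ ≤ g := (div_le_iff₀' hβ).2 hng
  have : δ * α * (n / β') ≤ δ * α * g :=
    mul_le_mul_of_nonneg_left hn_div (mul_nonneg hδ hα)
  calc f₁ + δ / β' * (α * n) = f₁ + δ * α * (n / β') := by ring
    _ ≤ f₀ := by linarith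

lemma tendsto_zero_of_add_const_mul_le {u a : ℕ → ℝ} {c : ℝ} (hc : 0 < c)
    (ha : ∀ k, 0 ≤ a k) (hdec : ∀ k, u (k + 1) + c * a k ≤ u k)
    (hbdd : BddBelow (Set.range u)) :
    Tendsto a atTop (𝓝 0) := by
  have hanti : Antitone u :=
    antitone_nat_of_succ_le fun k => by nlinarith [hdec k, ha k]
  have hlim := tendsto_atTop_ciInf hanti hbdd
  have hdiff : Tendsto (fun k => (u k - u (k + 1)) / c) atTop (𝓝 0) := by
    simpa using (hlim.sub (hlim.comp (tendsto_add_atTop_nat 1))).div_const c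
  refine squeeze_zero ha (fun k => ?_) hdiff
  rw [le_div_iff₀' hc]
  linarith [hdec k]

theorem stmt_2_general
    {H : Type*} [NormedAddCommGroup H] [InnerProductSpace ℝ H]
    (C : Set H) (hCcv : Convex ℝ C)
    (f : H → ℝ)
    (gradf : H → H)
    (PC : H → H)
    (hPC : ∀ x : H, PC x ∈ C ∧ ∀ z ∈ C, ⟪x - PC x, z - PC x⟫ ≤ 0)
    (θ δ βlo βhi : ℝ)
    (hθ : θ ∈ Set.Ioo (0:ℝ) 1) (hδ : δ ∈ Set.Ioo (0:ℝ) 1)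
    (hβlo : 0 < βlo)
    (β : ℕ → ℝ) (hβk : ∀ k, β k ∈ Set.Icc βlo βhi)
    (x z : ℕ → H) (α : ℕ → ℝ) (j : ℕ → ℕ)
    (hx0 : x 0 ∈ C)
    (hz : ∀ k, z k = x k - β k • gradf (x k))
    (hjA : ∀ k, f ((θ ^ j k) • PC (z k) + (1 - θ ^ j k) • x k)
        ≤ f (x k) - δ * θ ^ j k * ⟪gradf (x k), x k - PC (z k)⟫)
    (hα : ∀ k, α k = θ ^ j k)
    (hstep : ∀ k, x (k+1) = α k • PC (z k) + (1 - α k) • x k)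
    (hS : ∃ xs ∈ C, ∀ y ∈ C, f xs ≤ f y)
    : Tendsto (fun k => α k * ‖x k - PC (z k)‖ ^ 2) atTop (nhds 0) := by
  obtain ⟨xs, -, hxs⟩ := hS
  have hα_pos : ∀ k, 0 < α k := fun k => hα k ▸ pow_pos hθ.1 _
  have hα_le : ∀ k, α k ≤ 1 := fun k => hα k ▸ pow_le_one₀ hθ.1.le hθ.2.le
  have hβ_pos : ∀ k, 0 < β k := fun k => hβlo.trans_le (hβk k).1
  have hxC : ∀ k, x k ∈ C := by
    intro k
    induction k with
    | zero => exact hx0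
    | succ k ih =>
      rw [hstep k]
      exact hCcv (hPC (z k)).1 ih (hα_pos k).le (by linarith [hα_le k]) (by ring)
  have hdist : ∀ k, ‖x k - PC (z k)‖ ^ 2 ≤ β k * ⟪gradf (x k), x k - PC (z k)⟫ :=
    fun k => norm_sub_sq_le_mul_inner_of_inner_sub_smul_le_zero (hz k ▸ (hPC (z k)).2 (x k) (hxC k))
  have hdecrease : ∀ k,
      f (x (k + 1)) + δ / βhi * (α k * ‖x k - PC (z k)‖ ^ 2) ≤ f (x k) := fun k => by
    have harmijo := hjA k
    rw [← hα k, ← hstep k] at harmijo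
    exact add_div_mul_le_of_armijo hδ.1.le (hα_pos k).le (hβ_pos k) (hβk k).2 (by positivity)
      (hdist k) harmijo
  have hc : 0 < δ / βhi := div_pos hδ.1 ((hβ_pos 0).trans_le (hβk 0).2)
  have hbdd : BddBelow (Set.range fun k => f (x k)) := by
    refine ⟨f xs, ?_⟩
    rintro _ ⟨k, rfl⟩
    exact hxs (x k) (hxC k)
  exact tendsto_zero_of_add_const_mul_le hc (fun k => by have := hα_pos k; positivity)
    hdecrease hbdd

theorem stmt_2
    {H : Type*} [NormedAddCommGroup H] [InnerProductSpace ℝ H] [CompleteSpace H]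
    (C : Set H) (hCne : C.Nonempty) (hCcl : IsClosed C) (hCcv : Convex ℝ C)
    (f : H → ℝ) (hf : ConvexOn ℝ Set.univ f)
    (gradf : H → H)
    (hgrad : ∀ x d : H,
      Tendsto (fun t : ℝ => (f (x + t • d) - f x) / t) (nhdsWithin 0 (Set.Ioi 0))
        (nhds ⟪gradf x, d⟫))
    (PC : H → H)
    (hPC : ∀ x : H, PC x ∈ C ∧ ∀ z ∈ C, ⟪x - PC x, z - PC x⟫ ≤ 0)
    (θ δ βlo βhi : ℝ)
    (hθ : θ ∈ Set.Ioo (0:ℝ) 1) (hδ : δ ∈ Set.Ioo (0:ℝ) 1)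
    (hβlo : 0 < βlo) (hββ : βlo ≤ βhi)
    (β : ℕ → ℝ) (hβk : ∀ k, β k ∈ Set.Icc βlo βhi)
    (x z : ℕ → H) (α : ℕ → ℝ) (j : ℕ → ℕ)
    (hx0 : x 0 ∈ C)
    (hz : ∀ k, z k = x k - β k • gradf (x k))
    (hjA : ∀ k, f ((θ ^ j k) • PC (z k) + (1 - θ ^ j k) • x k)
        ≤ f (x k) - δ * θ ^ j k * ⟪gradf (x k), x k - PC (z k)⟫)
    (hjmin : ∀ k, ∀ i < j k, ¬ (f ((θ ^ i) • PC (z k) + (1 - θ ^ i) • x k)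
        ≤ f (x k) - δ * θ ^ i * ⟪gradf (x k), x k - PC (z k)⟫))
    (hα : ∀ k, α k = θ ^ j k)
    (hstep : ∀ k, x (k+1) = α k • PC (z k) + (1 - α k) • x k)
    (hS : ∃ xs ∈ C, ∀ y ∈ C, f xs ≤ f y)
    : Tendsto (fun k => α k * ‖x k - PC (z k)‖ ^ 2) atTop (nhds 0) :=
  stmt_2_general C hCcv f gradf PC hPC θ δ βlo βhi hθ hδ hβlo β hβk x z α j hx0 hz hjA hα hstep hS
end

section
/- Along Algorithm A1, for every x_* ∈ S_* and every k, ‖x^{k+1} − x_*‖² ≤ ‖x^k − x_*‖² − α_k ‖x^k − P_C(z^k)‖² + (2β̂/δ)(f(x^k) − f(x^{k+1})). -/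
open Filter Set
open scoped RealInnerProductSpace Topology

/-!
The projection inequality for `P_C(z^k)`, tested at `x^k` and at `x_*`, gives
`‖x^k - P_C(z^k)‖² ≤ β_k ⟪∇f(x^k), x^k - P_C(z^k)⟫` and, after the first-order optimality
`⟪∇f(x^k), x_* - x^k⟫ ≤ f(x_*) - f(x^k) ≤ 0`, the same bound for `⟪x^k - P_C(z^k), x_* - P_C(z^k)⟫`.
Expanding `‖x^{k+1} - x_*‖²` along the segment and using `α_k² ≤ α_k` leaves the excess
`2 α_k β_k ⟪∇f(x^k), x^k - P_C(z^k)⟫`, which the Armijo condition bounds by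
`(2β̂/δ)(f(x^k) - f(x^{k+1}))`.
-/

theorem ConvexOn.le_sub_of_tendsto_slope {E : Type*} [AddCommGroup E] [Module ℝ E]
    {s : Set E} {f : E → ℝ} (hf : ConvexOn ℝ s f) {x y : E} (hx : x ∈ s) (hy : y ∈ s) {L : ℝ}
    (hL : Tendsto (fun t : ℝ => (f (x + t • (y - x)) - f x) / t) (𝓝[>] 0) (𝓝 L)) :
    L ≤ f y - f x := by
  refine le_of_tendsto hL ?_
  filter_upwards [Ioo_mem_nhdsGT (zero_lt_one' ℝ)] with t ⟨ht0, ht1⟩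
  have hseg : x + t • (y - x) = (1 - t) • x + t • y := by
    rw [sub_smul, one_smul, smul_sub]; abel
  have hcv := hf.2 hx hy (by linarith : (0 : ℝ) ≤ 1 - t) ht0.le (by ring)
  rw [hseg, div_le_iff₀ ht0]
  simp only [smul_eq_mul] at hcv
  linarith

theorem Convex.iterate_convexComb_mem {E : Type*} [AddCommGroup E] [Module ℝ E] {C : Set E}
    (hC : Convex ℝ C) {x p : ℕ → E} {α : ℕ → ℝ} (h0 : x 0 ∈ C) (hp : ∀ k, p k ∈ C)
    (hα : ∀ k, α k ∈ Icc (0 : ℝ) 1) (hstep : ∀ k, x (k + 1) = α k • p k + (1 - α k) • x k) :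
    ∀ k, x k ∈ C
  | 0 => h0
  | k + 1 => by
    rw [hstep k]
    exact hC (hp k) (hC.iterate_convexComb_mem h0 hp hα hstep k) (hα k).1
      (by linarith [(hα k).2]) (by ring)

section ProjectedGradientStep

variable {H : Type*} [NormedAddCommGroup H] [InnerProductSpace ℝ H]

theorem norm_convexComb_sub_sq (α : ℝ) (x p y : H) :
    ‖α • p + (1 - α) • x - y‖ ^ 2
      = ‖x - y‖ ^ 2 - 2 * α * (‖x - p‖ ^ 2 - ⟪x - p, y - p⟫) + α ^ 2 * ‖x - p‖ ^ 2 := by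
  have hdiff : α • p + (1 - α) • x - y = (x - y) - α • (x - p) := by
    rw [sub_smul, one_smul, smul_sub]; abel
  have hcross : ⟪x - y, x - p⟫ = ‖x - p‖ ^ 2 - ⟪x - p, y - p⟫ := by
    rw [← real_inner_self_eq_norm_sq, ← inner_sub_right, real_inner_comm]
    congr 1; abel
  rw [hdiff, norm_sub_sq_real, real_inner_smul_right, hcross, norm_smul, mul_pow,
    Real.norm_eq_abs, sq_abs]
  ring

variable {x p g y : H} {β : ℝ}

theorem norm_sub_sq_le_of_proj_gradStep (hp : ⟪x - β • g - p, x - p⟫ ≤ 0) :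
    ‖x - p‖ ^ 2 ≤ β * ⟪g, x - p⟫ := by
  rw [sub_right_comm, inner_sub_left, real_inner_smul_left, real_inner_self_eq_norm_sq] at hp
  linarith

theorem inner_le_of_proj_gradStep (hp : ⟪x - β • g - p, y - p⟫ ≤ 0) (hβ : 0 ≤ β)
    (hy : ⟪g, y - x⟫ ≤ 0) : ⟪x - p, y - p⟫ ≤ β * ⟪g, x - p⟫ := by
  have hsplit : ⟪g, y - p⟫ = ⟪g, y - x⟫ + ⟪g, x - p⟫ := by
    rw [← inner_add_right, sub_add_sub_cancel]
  rw [sub_right_comm, inner_sub_left, real_inner_smul_left, hsplit] at hp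
  nlinarith

theorem norm_armijo_step_sub_sq_le {α βhi δ fx fx' : ℝ}
    (hpx : ⟪x - β • g - p, x - p⟫ ≤ 0) (hpy : ⟪x - β • g - p, y - p⟫ ≤ 0)
    (hy : ⟪g, y - x⟫ ≤ 0) (hα : α ∈ Icc (0 : ℝ) 1) (hβ : 0 < β) (hβhi : β ≤ βhi) (hδ : 0 < δ)
    (harmijo : fx' ≤ fx - δ * α * ⟪g, x - p⟫) :
    ‖α • p + (1 - α) • x - y‖ ^ 2
      ≤ ‖x - y‖ ^ 2 - α * ‖x - p‖ ^ 2 + (2 * βhi / δ) * (fx - fx') := by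
  obtain ⟨hα0, hα1⟩ := hα
  have hN := norm_sub_sq_le_of_proj_gradStep hpx
  have hQ := inner_le_of_proj_gradStep hpy hβ.le hy
  have hI : 0 ≤ ⟪g, x - p⟫ := by
    have := sq_nonneg ‖x - p‖
    nlinarith
  have hαα : α ^ 2 * ‖x - p‖ ^ 2 ≤ α * ‖x - p‖ ^ 2 :=
    mul_le_mul_of_nonneg_right (by nlinarith) (sq_nonneg _)
  have hexcess : 2 * α * (β * ⟪g, x - p⟫) ≤ (2 * βhi / δ) * (fx - fx') := by
    rw [div_mul_eq_mul_div, le_div_iff₀ hδ]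
    have : α * ⟪g, x - p⟫ * β ≤ α * ⟪g, x - p⟫ * βhi :=
      mul_le_mul_of_nonneg_left hβhi (mul_nonneg hα0 hI)
    nlinarith
  rw [norm_convexComb_sub_sq]
  linarith [mul_le_mul_of_nonneg_left hQ hα0]

end ProjectedGradientStep

theorem stmt_4_general
    {H : Type*} [NormedAddCommGroup H] [InnerProductSpace ℝ H]
    (C : Set H) (hCcv : Convex ℝ C)
    (f : H → ℝ) (hf : ConvexOn ℝ Set.univ f)
    (gradf : H → H)
    (hgrad : ∀ x d : H,
      Tendsto (fun t : ℝ => (f (x + t • d) - f x) / t) (nhdsWithin 0 (Set.Ioi 0))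
        (nhds ⟪gradf x, d⟫))
    (PC : H → H)
    (hPC : ∀ x : H, PC x ∈ C ∧ ∀ z ∈ C, ⟪x - PC x, z - PC x⟫ ≤ 0)
    (θ δ βlo βhi : ℝ)
    (hθ : θ ∈ Set.Ioo (0:ℝ) 1) (hδ : δ ∈ Set.Ioo (0:ℝ) 1)
    (hβlo : 0 < βlo)
    (β : ℕ → ℝ) (hβk : ∀ k, β k ∈ Set.Icc βlo βhi)
    (x z : ℕ → H) (α : ℕ → ℝ) (j : ℕ → ℕ)
    (hx0 : x 0 ∈ C)
    (hz : ∀ k, z k = x k - β k • gradf (x k))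
    (hjA : ∀ k, f ((θ ^ j k) • PC (z k) + (1 - θ ^ j k) • x k)
        ≤ f (x k) - δ * θ ^ j k * ⟪gradf (x k), x k - PC (z k)⟫)
    (hα : ∀ k, α k = θ ^ j k)
    (hstep : ∀ k, x (k+1) = α k • PC (z k) + (1 - α k) • x k)
    : ∀ xs : H, xs ∈ C → (∀ y ∈ C, f xs ≤ f y) → ∀ k,
      ‖x (k+1) - xs‖ ^ 2 ≤ ‖x k - xs‖ ^ 2 - α k * ‖x k - PC (z k)‖ ^ 2
        + (2 * βhi / δ) * (f (x k) - f (x (k+1))) := by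
  intro xs hxs hmin k
  have hα01 : ∀ m, α m ∈ Icc (0 : ℝ) 1 := fun m =>
    hα m ▸ ⟨pow_nonneg hθ.1.le _, pow_le_one₀ hθ.1.le hθ.2.le⟩
  have hxC := hCcv.iterate_convexComb_mem hx0 (fun m => (hPC (z m)).1) hα01 hstep
  have hproj : ∀ w ∈ C, ⟪x k - β k • gradf (x k) - PC (z k), w - PC (z k)⟫ ≤ 0 := by
    rw [← hz k]; exact (hPC (z k)).2
  have hdescent : ⟪gradf (x k), xs - x k⟫ ≤ 0 := by
    have := (hf.le_sub_of_tendsto_slope (mem_univ _) (mem_univ _) (hgrad (x k) (xs - x k)))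
    linarith [hmin (x k) (hxC k)]
  rw [hstep k]
  exact norm_armijo_step_sub_sq_le (hproj _ (hxC k)) (hproj xs hxs) hdescent (hα01 k)
    (hβlo.trans_le (hβk k).1) (hβk k).2 hδ.1 (hα k ▸ hjA k)

theorem stmt_4
    {H : Type*} [NormedAddCommGroup H] [InnerProductSpace ℝ H] [CompleteSpace H]
    (C : Set H) (hCne : C.Nonempty) (hCcl : IsClosed C) (hCcv : Convex ℝ C)
    (f : H → ℝ) (hf : ConvexOn ℝ Set.univ f)
    (gradf : H → H)
    (hgrad : ∀ x d : H,
      Tendsto (fun t : ℝ => (f (x + t • d) - f x) / t) (nhdsWithin 0 (Set.Ioi 0))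
        (nhds ⟪gradf x, d⟫))
    (PC : H → H)
    (hPC : ∀ x : H, PC x ∈ C ∧ ∀ z ∈ C, ⟪x - PC x, z - PC x⟫ ≤ 0)
    (θ δ βlo βhi : ℝ)
    (hθ : θ ∈ Set.Ioo (0:ℝ) 1) (hδ : δ ∈ Set.Ioo (0:ℝ) 1)
    (hβlo : 0 < βlo) (hββ : βlo ≤ βhi)
    (β : ℕ → ℝ) (hβk : ∀ k, β k ∈ Set.Icc βlo βhi)
    (x z : ℕ → H) (α : ℕ → ℝ) (j : ℕ → ℕ)
    (hx0 : x 0 ∈ C)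
    (hz : ∀ k, z k = x k - β k • gradf (x k))
    (hjA : ∀ k, f ((θ ^ j k) • PC (z k) + (1 - θ ^ j k) • x k)
        ≤ f (x k) - δ * θ ^ j k * ⟪gradf (x k), x k - PC (z k)⟫)
    (hjmin : ∀ k, ∀ i < j k, ¬ (f ((θ ^ i) • PC (z k) + (1 - θ ^ i) • x k)
        ≤ f (x k) - δ * θ ^ i * ⟪gradf (x k), x k - PC (z k)⟫))
    (hα : ∀ k, α k = θ ^ j k)
    (hstep : ∀ k, x (k+1) = α k • PC (z k) + (1 - α k) • x k)
    : ∀ xs : H, xs ∈ C → (∀ y ∈ C, f xs ≤ f y) → ∀ k,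
      ‖x (k+1) - xs‖ ^ 2 ≤ ‖x k - xs‖ ^ 2 - α k * ‖x k - PC (z k)‖ ^ 2
        + (2 * βhi / δ) * (f (x k) - f (x (k+1))) :=
  stmt_4_general C hCcv f hf gradf hgrad PC hPC θ δ βlo βhi hθ hδ hβlo β hβk x z α j hx0 hz hjA hα
    hstep
end

section
/- Assume S_* ≠ ∅. Then along Algorithm A2, for every k one has S_* ⊆ C ∩ H_k ∩ W_k; in particular C ∩ H_k ∩ W_k is nonempty, closed and convex, so the iterate x^{k+1} = P_{C ∩ W_k ∩ H_k}(x^0) is well defined. -/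
open Filter
open scoped RealInnerProductSpace

/-!
A minimizer `x⋆` lies in `H_k` by the gradient inequality `⟪∇f(xᵏ), x⋆ - xᵏ⟫ + f(xᵏ) ≤ f(x⋆)`,
since `f(x⋆) ≤ f^lev_k`, the latter being a value of `f` at a point of `C`. It lies in `W_k` by
induction: `W_0 = H`, and once `S_* ⊆ C ∩ W_k ∩ H_k`, the variational characterization of
`x^{k+1} = P_{C ∩ W_k ∩ H_k}(x⁰)` says exactly that `S_* ⊆ W_{k+1}`.
-/

theorem le_of_forall_le_of_eq_min_succ {α : Type*} [LinearOrder α] {u m : ℕ → α} {b : α}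
    (hb : ∀ k, b ≤ u k) (h0 : m 0 = u 0) (hsucc : ∀ k, m (k + 1) = min (m k) (u (k + 1)))
    (k : ℕ) : b ≤ m k := by
  induction k with
  | zero => exact h0 ▸ hb 0
  | succ k ih => exact (hsucc k).symm ▸ le_min ih (hb (k + 1))

section

open Set

variable {H : Type*} [NormedAddCommGroup H] [InnerProductSpace ℝ H]

theorem ConvexOn.le_sub_of_tendsto_slope_s11 {f : H → ℝ} (hf : ConvexOn ℝ univ f) {x d : H} {L : ℝ}
    (hL : Tendsto (fun t : ℝ => (f (x + t • d) - f x) / t) (nhdsWithin 0 (Ioi 0)) (nhds L)) :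
    L ≤ f (x + d) - f x := by
  set g : ℝ → ℝ := fun t => f (x + t • d)
  have hg : ConvexOn ℝ univ g := by
    simpa [Function.comp_def, AffineMap.lineMap_apply_module', add_comm] using
      hf.comp_affineMap (AffineMap.lineMap x (x + d))
  have hg' : HasDerivWithinAt g L (Ioi 0) 0 := by
    rw [hasDerivWithinAt_iff_tendsto_slope' self_notMem_Ioi]
    simpa [slope_fun_def_field, g] using hL
  simpa [slope_def_field, g] using
    hg.le_slope_of_hasDerivWithinAt_Ioi (mem_univ 0) (mem_univ 1) one_pos hg'

theorem real_inner_sub_le_zero_of_forall_norm_sub_le {K : Set H} (hK : Convex ℝ K) {u p : H}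
    (hp : p ∈ K) (hmin : ∀ w ∈ K, ‖p - u‖ ≤ ‖w - u‖) {w : H} (hw : w ∈ K) :
    ⟪w - p, u - p⟫ ≤ 0 := by
  have : Nonempty K := ⟨⟨p, hp⟩⟩
  have hbdd : BddBelow (range fun w : K => ‖u - w‖) :=
    ⟨0, forall_mem_range.2 fun _ => norm_nonneg _⟩
  have hinf : ‖u - p‖ = ⨅ w : K, ‖u - w‖ :=
    le_antisymm (le_ciInf fun w => by simpa only [norm_sub_rev u] using hmin w w.2)
      (ciInf_le hbdd ⟨p, hp⟩)
  rw [real_inner_comm]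
  exact (norm_eq_iInf_iff_real_inner_le_zero hK hp).1 hinf w hw

theorem convex_setOf_inner_sub_le (v a : H) (r : ℝ) : Convex ℝ {y : H | ⟪v, y - a⟫ ≤ r} := by
  simpa only [inner_sub_right, sub_le_iff_le_add, innerₛₗ_apply_apply] using
    convex_halfSpace_le (innerₛₗ ℝ v).isLinear (r + ⟪v, a⟫)

variable {C : Set H} (a b g : H) (c d : ℝ)

theorem IsClosed.setOf_mem_inner_sub_le_zero_and (hC : IsClosed C) :
    IsClosed {y : H | y ∈ C ∧ ⟪y - a, b - a⟫ ≤ 0 ∧ ⟪g, y - a⟫ + c - d ≤ 0} := by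
  have hW : IsClosed {y : H | ⟪y - a, b - a⟫ ≤ 0} :=
    _root_.isClosed_le (by fun_prop) continuous_const
  have hH : IsClosed {y : H | ⟪g, y - a⟫ + c - d ≤ 0} :=
    _root_.isClosed_le (by fun_prop) continuous_const
  exact hC.inter (hW.inter hH)

theorem Convex.setOf_mem_inner_sub_le_zero_and (hC : Convex ℝ C) :
    Convex ℝ {y : H | y ∈ C ∧ ⟪y - a, b - a⟫ ≤ 0 ∧ ⟪g, y - a⟫ + c - d ≤ 0} := by
  have hW : Convex ℝ {y : H | ⟪y - a, b - a⟫ ≤ 0} := by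
    simpa only [real_inner_comm] using convex_setOf_inner_sub_le (b - a) a 0
  have hH : Convex ℝ {y : H | ⟪g, y - a⟫ + c - d ≤ 0} := by
    simpa only [sub_nonpos, ← le_sub_iff_add_le] using convex_setOf_inner_sub_le g a (d - c)
  exact hC.inter (hW.inter hH)

end

theorem stmt_11_general
    {H : Type*} [NormedAddCommGroup H] [InnerProductSpace ℝ H]
    (C : Set H) (hCcl : IsClosed C) (hCcv : Convex ℝ C)
    (f : H → ℝ) (hf : ConvexOn ℝ Set.univ f)
    (gradf : H → H)
    (hgrad : ∀ x d : H,
      Tendsto (fun t : ℝ => (f (x + t • d) - f x) / t) (nhdsWithin 0 (Set.Ioi 0))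
        (nhds ⟪gradf x, d⟫))
    (PC : H → H)
    (hPC : ∀ x : H, PC x ∈ C ∧ ∀ z ∈ C, ⟪x - PC x, z - PC x⟫ ≤ 0)
    (θ : ℝ)
    (hθ : θ ∈ Set.Ioo (0:ℝ) 1)
    (x z : ℕ → H) (j : ℕ → ℕ)
    (hx0 : x 0 ∈ C)
    (flev : ℕ → ℝ)
    (hflev0 : flev 0 = f ((θ ^ j 0) • PC (z 0) + (1 - θ ^ j 0) • x 0))
    (hflevS : ∀ k, flev (k+1) =
        min (flev k) (f ((θ ^ j (k+1)) • PC (z (k+1)) + (1 - θ ^ j (k+1)) • x (k+1))))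
    (hstep : ∀ k,
      (x (k+1) ∈ C ∧ ⟪x (k+1) - x k, x 0 - x k⟫ ≤ 0 ∧
        ⟪gradf (x k), x (k+1) - x k⟫ + f (x k) - flev k ≤ 0) ∧
      ∀ y : H, y ∈ C → ⟪y - x k, x 0 - x k⟫ ≤ 0 →
        ⟪gradf (x k), y - x k⟫ + f (x k) - flev k ≤ 0 →
        ‖x (k+1) - x 0‖ ≤ ‖y - x 0‖)
    (hS : ∃ xs ∈ C, ∀ y ∈ C, f xs ≤ f y)
    : ∀ k, (∀ xs : H, xs ∈ C → (∀ y ∈ C, f xs ≤ f y) →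
        xs ∈ {y : H | y ∈ C ∧ ⟪y - x k, x 0 - x k⟫ ≤ 0 ∧
        ⟪gradf (x k), y - x k⟫ + f (x k) - flev k ≤ 0}) ∧
      Set.Nonempty ({y : H | y ∈ C ∧ ⟪y - x k, x 0 - x k⟫ ≤ 0 ∧
        ⟪gradf (x k), y - x k⟫ + f (x k) - flev k ≤ 0}) ∧
      IsClosed ({y : H | y ∈ C ∧ ⟪y - x k, x 0 - x k⟫ ≤ 0 ∧
        ⟪gradf (x k), y - x k⟫ + f (x k) - flev k ≤ 0}) ∧
      Convex ℝ ({y : H | y ∈ C ∧ ⟪y - x k, x 0 - x k⟫ ≤ 0 ∧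
        ⟪gradf (x k), y - x k⟫ + f (x k) - flev k ≤ 0}) := by
  obtain ⟨xs₀, hxs₀C, hxs₀⟩ := hS
  have hxC : ∀ k, x k ∈ C
    | 0 => hx0
    | k + 1 => (hstep k).1.1
  have htrial : ∀ k, (θ ^ j k) • PC (z k) + (1 - θ ^ j k) • x k ∈ C := fun k =>
    hCcv (hPC (z k)).1 (hxC k) (pow_nonneg hθ.1.le _)
      (sub_nonneg.2 (pow_le_one₀ hθ.1.le hθ.2.le)) (add_sub_cancel _ _)
  have hlev := le_of_forall_le_of_eq_min_succ (fun k => hxs₀ _ (htrial k)) hflev0 hflevS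
  have hH : ∀ k, ∀ xs ∈ C, (∀ y ∈ C, f xs ≤ f y) →
      ⟪gradf (x k), xs - x k⟫ + f (x k) - flev k ≤ 0 := fun k xs _ hxs => by
    have := hf.le_sub_of_tendsto_slope_s11 (hgrad (x k) (xs - x k))
    rw [add_sub_cancel] at this
    linarith [hxs xs₀ hxs₀C, hlev k]
  have hmem (k : ℕ) : ∀ xs ∈ C, (∀ y ∈ C, f xs ≤ f y) →
      xs ∈ {y : H | y ∈ C ∧ ⟪y - x k, x 0 - x k⟫ ≤ 0 ∧
        ⟪gradf (x k), y - x k⟫ + f (x k) - flev k ≤ 0} := by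
    induction k with
    | zero => exact fun xs hxsC hxs => ⟨hxsC, by simp, hH 0 xs hxsC hxs⟩
    | succ k ih =>
      refine fun xs hxsC hxs => ⟨hxsC, ?_, hH (k + 1) xs hxsC hxs⟩
      exact real_inner_sub_le_zero_of_forall_norm_sub_le
        (hCcv.setOf_mem_inner_sub_le_zero_and _ _ _ _ _) (hstep k).1
        (fun y hy => (hstep k).2 y hy.1 hy.2.1 hy.2.2) (ih xs hxsC hxs)
  exact fun k => ⟨hmem k, ⟨xs₀, hmem k xs₀ hxs₀C hxs₀⟩,
    hCcl.setOf_mem_inner_sub_le_zero_and _ _ _ _ _,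
    hCcv.setOf_mem_inner_sub_le_zero_and _ _ _ _ _⟩

theorem stmt_11
    {H : Type*} [NormedAddCommGroup H] [InnerProductSpace ℝ H] [CompleteSpace H]
    (C : Set H) (hCne : C.Nonempty) (hCcl : IsClosed C) (hCcv : Convex ℝ C)
    (f : H → ℝ) (hf : ConvexOn ℝ Set.univ f)
    (gradf : H → H)
    (hgrad : ∀ x d : H,
      Tendsto (fun t : ℝ => (f (x + t • d) - f x) / t) (nhdsWithin 0 (Set.Ioi 0))
        (nhds ⟪gradf x, d⟫))
    (PC : H → H)
    (hPC : ∀ x : H, PC x ∈ C ∧ ∀ z ∈ C, ⟪x - PC x, z - PC x⟫ ≤ 0)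
    (θ δ βlo βhi : ℝ)
    (hθ : θ ∈ Set.Ioo (0:ℝ) 1) (hδ : δ ∈ Set.Ioo (0:ℝ) 1)
    (hβlo : 0 < βlo) (hββ : βlo ≤ βhi)
    (β : ℕ → ℝ) (hβk : ∀ k, β k ∈ Set.Icc βlo βhi)
    (x z : ℕ → H) (α : ℕ → ℝ) (j : ℕ → ℕ)
    (hx0 : x 0 ∈ C)
    (hz : ∀ k, z k = x k - β k • gradf (x k))
    (hjA : ∀ k, f ((θ ^ j k) • PC (z k) + (1 - θ ^ j k) • x k)
        ≤ f (x k) - δ * θ ^ j k * ⟪gradf (x k), x k - PC (z k)⟫)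
    (hjmin : ∀ k, ∀ i < j k, ¬ (f ((θ ^ i) • PC (z k) + (1 - θ ^ i) • x k)
        ≤ f (x k) - δ * θ ^ i * ⟪gradf (x k), x k - PC (z k)⟫))
    (hα : ∀ k, α k = θ ^ j k)
    (flev : ℕ → ℝ)
    (hflev0 : flev 0 = f ((θ ^ j 0) • PC (z 0) + (1 - θ ^ j 0) • x 0))
    (hflevS : ∀ k, flev (k+1) =
        min (flev k) (f ((θ ^ j (k+1)) • PC (z (k+1)) + (1 - θ ^ j (k+1)) • x (k+1))))
    (hstep : ∀ k,
      (x (k+1) ∈ C ∧ ⟪x (k+1) - x k, x 0 - x k⟫ ≤ 0 ∧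
        ⟪gradf (x k), x (k+1) - x k⟫ + f (x k) - flev k ≤ 0) ∧
      ∀ y : H, y ∈ C → ⟪y - x k, x 0 - x k⟫ ≤ 0 →
        ⟪gradf (x k), y - x k⟫ + f (x k) - flev k ≤ 0 →
        ‖x (k+1) - x 0‖ ≤ ‖y - x 0‖)
    (hS : ∃ xs ∈ C, ∀ y ∈ C, f xs ≤ f y)
    : ∀ k, (∀ xs : H, xs ∈ C → (∀ y ∈ C, f xs ≤ f y) →
        xs ∈ {y : H | y ∈ C ∧ ⟪y - x k, x 0 - x k⟫ ≤ 0 ∧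
        ⟪gradf (x k), y - x k⟫ + f (x k) - flev k ≤ 0}) ∧
      Set.Nonempty ({y : H | y ∈ C ∧ ⟪y - x k, x 0 - x k⟫ ≤ 0 ∧
        ⟪gradf (x k), y - x k⟫ + f (x k) - flev k ≤ 0}) ∧
      IsClosed ({y : H | y ∈ C ∧ ⟪y - x k, x 0 - x k⟫ ≤ 0 ∧
        ⟪gradf (x k), y - x k⟫ + f (x k) - flev k ≤ 0}) ∧
      Convex ℝ ({y : H | y ∈ C ∧ ⟪y - x k, x 0 - x k⟫ ≤ 0 ∧
        ⟪gradf (x k), y - x k⟫ + f (x k) - flev k ≤ 0}) :=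
  stmt_11_general C hCcl hCcv f hf gradf hgrad PC hPC θ hθ x z j hx0 flev hflev0 hflevS hstep hS
end
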